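/- For every integer k ≥ 2, the joint law μ_k of two consecutive states (X_k, X_{k+1}) of the Kendall random walk with α = 1 and unit step δ_1 assigns to the diagonal the mass μ_k({(u,v) ∈ ℝ² : u = v}) = (k−1)/(k+1). -/

import Mathlib

open MeasureTheory Set

/-- The Pareto probability measure `π_2`, with density `2 x⁻³ 1_{(1,∞)}(x)`. -/
noncomputable def pareto2 : Measure ℝ :=
  volume.withDensity (fun x => ENNReal.ofReal (if 1 < x then 2 / x ^ 3 else 0))

/-- The distribution `λ_k = δ_1^{△_1 k}` of the state `X_k` of the Kendall random walk
(`α = 1`, unit step `δ_1`), with density `k (k-1) x⁻³ (1 - 1/x)^(k-2) 1_{(1,∞)}(x)`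
for `k ≥ 2`. -/
noncomputable def lamK (k : ℕ) : Measure ℝ :=
  volume.withDensity (fun x => ENNReal.ofReal
    (if 1 < x then (k : ℝ) * ((k : ℝ) - 1) / x ^ 3 * (1 - 1 / x) ^ (k - 2) else 0))

/-- The one-step transition kernel `K(u, ·) = u⁻¹ (T_u π_2) + (1 - u⁻¹) δ_u` of the
Kendall random walk with `α = 1` and unit step `δ_1`. -/
noncomputable def kendallStep (u : ℝ) : Measure ℝ :=
  ENNReal.ofReal u⁻¹ • Measure.map (fun x => u * x) pareto2
    + ENNReal.ofReal (1 - u⁻¹) • Measure.dirac u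

/-- The joint law `μ_k = λ_k ⊗ K` of two consecutive states `(X_k, X_{k+1})`:
`μ_k(C) = ∫ K(u, {v : (u,v) ∈ C}) λ_k(du)`. -/
noncomputable def jointLaw (k : ℕ) : Measure (ℝ × ℝ) :=
  (lamK k).bind (fun u => (kendallStep u).map (fun v => (u, v)))

/-! Under `K(u, ·)` the scaled Pareto part has no atoms, so only the Dirac part charges the
diagonal slice `{u}`, with mass `1 - u⁻¹`. Hence `μ_k(Δ) = ∫ (1 - u⁻¹) dλ_k
= k (k-1) ∫_1^∞ w^(k-1) u⁻³ du` with `w = 1 - u⁻¹`. Since `u⁻³ = (1 - w) w'`, the integrand has the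
primitive `w^k / k - w^(k+1) / (k+1)`, whose limit `1 / (k (k+1))` at infinity gives
`(k-1)/(k+1)` (this is the Beta integral `k (k-1) B(2, k)` after `t = 1/u`). -/

open Filter Topology

section OneSubInvPow

variable (m : ℕ)

lemma hasDerivAt_one_sub_inv_pow_primitive {u : ℝ} (hu : u ≠ 0) :
    HasDerivAt (fun u : ℝ => (1 - u⁻¹) ^ (m + 1) / (m + 1) - (1 - u⁻¹) ^ (m + 2) / (m + 2))
      ((1 - u⁻¹) ^ m / u ^ 3) u := by
  have hw : HasDerivAt (fun u : ℝ => 1 - u⁻¹) (u ^ 2)⁻¹ u := by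
    simpa using (hasDerivAt_inv hu).const_sub 1
  refine (((hw.fun_pow (m + 1)).div_const (m + 1 : ℝ)).sub
    ((hw.fun_pow (m + 2)).div_const (m + 2 : ℝ))).congr_deriv ?_
  simp only [Nat.add_sub_cancel, show m + 2 - 1 = m + 1 from rfl, Nat.cast_add, Nat.cast_ofNat,
    Nat.cast_one, pow_succ]
  field_simp
  ring

lemma tendsto_one_sub_inv_pow_primitive :
    Tendsto (fun u : ℝ => (1 - u⁻¹) ^ (m + 1) / (m + 1) - (1 - u⁻¹) ^ (m + 2) / (m + 2)) atTop
      (𝓝 (1 / (((m : ℝ) + 1) * (m + 2)))) := by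
  have hw : Tendsto (fun u : ℝ => 1 - u⁻¹) atTop (𝓝 1) := by
    simpa using tendsto_inv_atTop_zero.const_sub (1 : ℝ)
  convert ((hw.pow (m + 1)).div_const (m + 1 : ℝ)).sub ((hw.pow (m + 2)).div_const (m + 2 : ℝ))
    using 2
  field_simp
  ring

lemma one_sub_inv_pow_div_cube_nonneg {u : ℝ} (hu : 1 < u) : 0 ≤ (1 - u⁻¹) ^ m / u ^ 3 := by
  have : u⁻¹ ≤ 1 := inv_le_one_of_one_le₀ hu.le
  have : 0 < u := by linarith
  positivity

lemma integral_Ioi_one_sub_inv_pow_div_cube :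
    ∫ u in Ioi (1 : ℝ), (1 - u⁻¹) ^ m / u ^ 3 = 1 / (((m : ℝ) + 1) * (m + 2)) := by
  rw [integral_Ioi_of_hasDerivAt_of_nonneg'
    (fun u hu => hasDerivAt_one_sub_inv_pow_primitive m (by linarith [mem_Ici.mp hu]))
    (fun u hu => one_sub_inv_pow_div_cube_nonneg m hu) (tendsto_one_sub_inv_pow_primitive m)]
  simp

lemma lintegral_Ioi_one_sub_inv_pow_div_cube :
    ∫⁻ u in Ioi (1 : ℝ), ENNReal.ofReal ((1 - u⁻¹) ^ m / u ^ 3)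
      = ENNReal.ofReal (1 / (((m : ℝ) + 1) * (m + 2))) := by
  rw [← integral_Ioi_one_sub_inv_pow_div_cube, ofReal_integral_eq_lintegral_ofReal]
  · exact integrableOn_Ioi_deriv_of_nonneg'
      (fun u hu => hasDerivAt_one_sub_inv_pow_primitive m (by linarith [mem_Ici.mp hu]))
      (fun u hu => one_sub_inv_pow_div_cube_nonneg m hu) (tendsto_one_sub_inv_pow_primitive m)
  · filter_upwards [ae_restrict_mem measurableSet_Ioi] with u hu
    exact one_sub_inv_pow_div_cube_nonneg m hu

end OneSubInvPow

instance : SFinite pareto2 := by unfold pareto2; infer_instance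

instance : NullSingletonClass pareto2 := by unfold pareto2; infer_instance

lemma kendallStep_apply (u : ℝ) {t : Set ℝ} (ht : MeasurableSet t) :
    kendallStep u t = ENNReal.ofReal u⁻¹ * pareto2 ((u * ·) ⁻¹' t)
      + ENNReal.ofReal (1 - u⁻¹) * t.indicator 1 u := by
  rw [kendallStep, Measure.add_apply, Measure.smul_apply, Measure.smul_apply,
    Measure.map_apply (measurable_const_mul u) ht, Measure.dirac_apply' u ht, smul_eq_mul,
    smul_eq_mul]

lemma kendallStep_apply_singleton_self (u : ℝ) :
    kendallStep u {u} = ENNReal.ofReal (1 - u⁻¹) := by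
  rw [kendallStep_apply u (measurableSet_singleton u)]
  rcases eq_or_ne u 0 with rfl | hu
  · simp
  · have : (u * ·) ⁻¹' {u} = {1} := by ext x; simp [hu]
    simp [this]

lemma measurable_kendallStep_graph :
    Measurable fun u : ℝ => (kendallStep u).map (fun v => (u, v)) := by
  refine Measure.measurable_of_measurable_coe _ fun s hs => ?_
  simp_rw [Measure.map_apply measurable_prodMk_left hs,
    kendallStep_apply _ (measurable_prodMk_left hs)]
  have hscaled : MeasurableSet ((fun p : ℝ × ℝ => (p.1, p.1 * p.2)) ⁻¹' s) :=
    (measurable_fst.prodMk (measurable_fst.mul measurable_snd)) hs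
  refine (Measurable.mul ?_ (measurable_measure_prodMk_left hscaled)).add (Measurable.mul ?_ ?_)
  · fun_prop
  · fun_prop
  · exact (measurable_one.indicator hs).comp (measurable_id.prodMk measurable_id)

lemma jointLaw_apply (k : ℕ) {s : Set (ℝ × ℝ)} (hs : MeasurableSet s) :
    jointLaw k s = ∫⁻ u, kendallStep u (Prod.mk u ⁻¹' s) ∂lamK k := by
  rw [jointLaw, Measure.bind_apply hs measurable_kendallStep_graph.aemeasurable]
  simp_rw [Measure.map_apply measurable_prodMk_left hs]

lemma lintegral_lamK (k : ℕ) {f : ℝ → ENNReal} (hf : Measurable f) :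
    ∫⁻ u, f u ∂lamK k = ∫⁻ u in Ioi 1,
      ENNReal.ofReal ((k : ℝ) * ((k : ℝ) - 1) / u ^ 3 * (1 - 1 / u) ^ (k - 2)) * f u := by
  rw [lamK, lintegral_withDensity_eq_lintegral_mul _
    (Measurable.ite measurableSet_Ioi (by fun_prop) measurable_const).ennreal_ofReal hf,
    ← lintegral_indicator measurableSet_Ioi]
  refine lintegral_congr fun u => ?_
  by_cases hu : 1 < u <;> simp [hu]

/-- For every `k ≥ 2`, the joint law `μ_k` of two consecutive states `(X_k, X_{k+1})` of
the Kendall random walk (`α = 1`, unit step `δ_1`) gives the diagonal mass `(k-1)/(k+1)`. -/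
theorem jointLaw_diagonal (k : ℕ) (hk : 2 ≤ k) :
    jointLaw k {p : ℝ × ℝ | p.1 = p.2} = ENNReal.ofReal (((k : ℝ) - 1) / ((k : ℝ) + 1)) := by
  obtain ⟨n, rfl⟩ : ∃ n, k = n + 2 := ⟨k - 2, by omega⟩
  have hslice (u : ℝ) : Prod.mk u ⁻¹' {p : ℝ × ℝ | p.1 = p.2} = {u} := by ext; simp [eq_comm]
  have hdensity : ∀ u ∈ Ioi (1 : ℝ),
      ENNReal.ofReal (((n + 2 : ℕ) : ℝ) * (((n + 2 : ℕ) : ℝ) - 1) / u ^ 3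
        * (1 - 1 / u) ^ (n + 2 - 2)) * ENNReal.ofReal (1 - u⁻¹)
      = ENNReal.ofReal ((n + 2) * (n + 1)) * ENNReal.ofReal ((1 - u⁻¹) ^ (n + 1) / u ^ 3) := by
    intro u hu
    have : u⁻¹ ≤ 1 := inv_le_one_of_one_le₀ (le_of_lt hu)
    have : 0 < u := by linarith [mem_Ioi.mp hu]
    rw [← ENNReal.ofReal_mul' (by linarith), ← ENNReal.ofReal_mul' (by positivity)]
    congr 1
    push_cast
    rw [one_div]
    ring
  rw [jointLaw_apply _ (measurableSet_eq_fun measurable_fst measurable_snd)]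
  simp_rw [hslice, kendallStep_apply_singleton_self]
  rw [lintegral_lamK _ (by fun_prop), setLIntegral_congr_fun measurableSet_Ioi hdensity,
    lintegral_const_mul _ (by fun_prop), lintegral_Ioi_one_sub_inv_pow_div_cube,
    ← ENNReal.ofReal_mul (by positivity)]
  congr 1
  push_cast
  field_simp
  ring
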